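/- arXiv:2103.05300 — 2 statements merged into one kernel-verified Lean document; each statement's English description precedes it below -/
import Mathlib

section
/- Let λ̄ ∈ ℝ, let f : ℝ → ℝ, let ε > 0, and let λ, u, v : ℝ × ℝ → ℝ be twice continuously differentiable functions of (t, x) satisfying at every point the regularized symmetrized rotating shallow water system: ∂ₜλ + u∂ₓλ + (λ/2)∂ₓu = ε∂ₓₓλ, ∂ₜu + (λ/2)∂ₓλ + u∂ₓu − f(x)·v = ε∂ₓₓu, ∂ₜv + u∂ₓv + f(x)·u = ε∂ₓₓv. Define η(λ,u,v) = (λ²/8)(u² + v²) + (1/2)·((λ² − λ̄²)/4)² and G(λ,u,v) = (λ²u/8)(u² + v²) + (λ²u/4)·((λ² − λ̄²)/4). Then at every point (t, x): ∂ₜ[η(λ,u,v)] + ∂ₓ[G(λ,u,v)] = ε·[ (λ(u²+v²)/4 + λ(λ²−λ̄²)/8)·∂ₓₓλ + (λ²u/4)·∂ₓₓu + (λ²v/4)·∂ₓₓv ], where all functions are evaluated at (t, x). -/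
/-!
Take the dot product of the system with `∇η(V)`. The time derivatives add up to `∂ₜ η(V)`;
the Coriolis terms drop out because `(-f v, f u)` is orthogonal to the last two components
`(λ²u/4, λ²v/4)` of `∇η`; and `G` is an entropy flux for the symmetrized system,
i.e. `∇G = ∇η · A(V)` for its flux matrix `A`, so the transport terms add up to `∂ₓ G(V)`.
-/

/-- The entropy `η(λ,u,v) = (λ²/8)(u²+v²) + (1/2)((λ²−λ̄²)/4)²`. -/
noncomputable def rswEntropy (lamBar lam u v : ℝ) : ℝ :=
  lam ^ 2 / 8 * (u ^ 2 + v ^ 2) + 1 / 2 * ((lam ^ 2 - lamBar ^ 2) / 4) ^ 2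

/-- The entropy flux `G(λ,u,v) = (λ²u/8)(u²+v²) + (λ²u/4)((λ²−λ̄²)/4)`. -/
noncomputable def rswEntropyFlux (lamBar lam u v : ℝ) : ℝ :=
  lam ^ 2 * u / 8 * (u ^ 2 + v ^ 2) + lam ^ 2 * u / 4 * ((lam ^ 2 - lamBar ^ 2) / 4)

/-- `∇η(λ,u,v) · (a,b,c)`. -/
noncomputable def rswEntropyDirDeriv (lamBar lam u v a b c : ℝ) : ℝ :=
  (lam * (u ^ 2 + v ^ 2) / 4 + lam * (lam ^ 2 - lamBar ^ 2) / 8) * a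
    + lam ^ 2 * u / 4 * b + lam ^ 2 * v / 4 * c

section ChainRule

variable {lam u v : ℝ → ℝ} {lam' u' v' s : ℝ}

theorem hasDerivAt_rswEntropy (lamBar : ℝ) (hlam : HasDerivAt lam lam' s)
    (hu : HasDerivAt u u' s) (hv : HasDerivAt v v' s) :
    HasDerivAt (fun s => rswEntropy lamBar (lam s) (u s) (v s))
      (rswEntropyDirDeriv lamBar (lam s) (u s) (v s) lam' u' v') s := by
  unfold rswEntropy
  refine (((hlam.pow 2).div_const 8).mul ((hu.pow 2).add (hv.pow 2))).add
      ((((hlam.pow 2).sub_const (lamBar ^ 2)).div_const 4).pow 2 |>.const_mul (1 / 2))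
    |>.congr_deriv ?_
  simp only [rswEntropyDirDeriv, Pi.add_apply, Pi.pow_apply]
  ring

/-- The derivative of `G(V)` is `∇η(V) · A(V) V'`, where `A(V)` is the flux matrix
`[[u, λ/2, 0], [λ/2, u, 0], [0, 0, u]]` of the symmetrized system. -/
theorem hasDerivAt_rswEntropyFlux (lamBar : ℝ) (hlam : HasDerivAt lam lam' s)
    (hu : HasDerivAt u u' s) (hv : HasDerivAt v v' s) :
    HasDerivAt (fun s => rswEntropyFlux lamBar (lam s) (u s) (v s))
      (rswEntropyDirDeriv lamBar (lam s) (u s) (v s)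
        (u s * lam' + lam s / 2 * u') (lam s / 2 * lam' + u s * u') (u s * v')) s := by
  unfold rswEntropyFlux
  refine ((((hlam.pow 2).mul hu).div_const 8).mul ((hu.pow 2).add (hv.pow 2))).add
    ((((hlam.pow 2).mul hu).div_const 4).mul
      (((hlam.pow 2).sub_const (lamBar ^ 2)).div_const 4))
    |>.congr_deriv ?_
  simp only [rswEntropyDirDeriv, Pi.add_apply, Pi.mul_apply, Pi.pow_apply]
  ring

end ChainRule

theorem stmt_5_general (lamBar : ℝ) (f : ℝ → ℝ) (ε : ℝ) (lam u v : ℝ × ℝ → ℝ)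
    (hlam : ContDiff ℝ 2 lam) (hu : ContDiff ℝ 2 u) (hv : ContDiff ℝ 2 v)
    (heq1 : ∀ t x, deriv (fun s => lam (s, x)) t
        + u (t, x) * deriv (fun y => lam (t, y)) x
        + lam (t, x) / 2 * deriv (fun y => u (t, y)) x
        = ε * deriv (deriv (fun y => lam (t, y))) x)
    (heq2 : ∀ t x, deriv (fun s => u (s, x)) t
        + lam (t, x) / 2 * deriv (fun y => lam (t, y)) x
        + u (t, x) * deriv (fun y => u (t, y)) x - f x * v (t, x)
        = ε * deriv (deriv (fun y => u (t, y))) x)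
    (heq3 : ∀ t x, deriv (fun s => v (s, x)) t
        + u (t, x) * deriv (fun y => v (t, y)) x + f x * u (t, x)
        = ε * deriv (deriv (fun y => v (t, y))) x) :
    ∀ t x,
      deriv (fun s => rswEntropy lamBar (lam (s, x)) (u (s, x)) (v (s, x))) t
        + deriv (fun y => rswEntropyFlux lamBar (lam (t, y)) (u (t, y)) (v (t, y))) x
      = ε * ((lam (t, x) * ((u (t, x)) ^ 2 + (v (t, x)) ^ 2) / 4
              + lam (t, x) * ((lam (t, x)) ^ 2 - lamBar ^ 2) / 8)
                * deriv (deriv (fun y => lam (t, y))) x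
            + (lam (t, x)) ^ 2 * u (t, x) / 4 * deriv (deriv (fun y => u (t, y))) x
            + (lam (t, x)) ^ 2 * v (t, x) / 4 * deriv (deriv (fun y => v (t, y))) x) := by
  intro t x
  have hasDerivAt_t {g : ℝ × ℝ → ℝ} (hg : ContDiff ℝ 2 g) :
      HasDerivAt (fun s => g (s, x)) (deriv (fun s => g (s, x)) t) t :=
    ((hg.comp (contDiff_prodMk_left x)).differentiable two_ne_zero t).hasDerivAt
  have hasDerivAt_x {g : ℝ × ℝ → ℝ} (hg : ContDiff ℝ 2 g) :
      HasDerivAt (fun y => g (t, y)) (deriv (fun y => g (t, y)) x) x :=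
    ((hg.comp (contDiff_prodMk_right t)).differentiable two_ne_zero x).hasDerivAt
  rw [(hasDerivAt_rswEntropy lamBar (hasDerivAt_t hlam) (hasDerivAt_t hu)
      (hasDerivAt_t hv)).deriv,
    (hasDerivAt_rswEntropyFlux lamBar (hasDerivAt_x hlam) (hasDerivAt_x hu)
      (hasDerivAt_x hv)).deriv]
  simp only [rswEntropyDirDeriv]
  set l := lam (t, x)
  linear_combination (l * (u (t, x) ^ 2 + v (t, x) ^ 2) / 4 + l * (l ^ 2 - lamBar ^ 2) / 8)
      * heq1 t x + l ^ 2 * u (t, x) / 4 * heq2 t x + l ^ 2 * v (t, x) / 4 * heq3 t x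

/-- Along C² solutions of the diffusively regularized symmetrized rotating shallow
water system, `∂ₜ η(V) + ∂ₓ G(V) = ε ∇η(V) · ∂ₓₓ V`. -/
theorem stmt_5 (lamBar : ℝ) (f : ℝ → ℝ) (ε : ℝ) (hε : 0 < ε) (lam u v : ℝ × ℝ → ℝ)
    (hlam : ContDiff ℝ 2 lam) (hu : ContDiff ℝ 2 u) (hv : ContDiff ℝ 2 v)
    (heq1 : ∀ t x, deriv (fun s => lam (s, x)) t
        + u (t, x) * deriv (fun y => lam (t, y)) x
        + lam (t, x) / 2 * deriv (fun y => u (t, y)) x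
        = ε * deriv (deriv (fun y => lam (t, y))) x)
    (heq2 : ∀ t x, deriv (fun s => u (s, x)) t
        + lam (t, x) / 2 * deriv (fun y => lam (t, y)) x
        + u (t, x) * deriv (fun y => u (t, y)) x - f x * v (t, x)
        = ε * deriv (deriv (fun y => u (t, y))) x)
    (heq3 : ∀ t x, deriv (fun s => v (s, x)) t
        + u (t, x) * deriv (fun y => v (t, y)) x + f x * u (t, x)
        = ε * deriv (deriv (fun y => v (t, y))) x) :
    ∀ t x,
      deriv (fun s => rswEntropy lamBar (lam (s, x)) (u (s, x)) (v (s, x))) t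
        + deriv (fun y => rswEntropyFlux lamBar (lam (t, y)) (u (t, y)) (v (t, y))) x
      = ε * ((lam (t, x) * ((u (t, x)) ^ 2 + (v (t, x)) ^ 2) / 4
              + lam (t, x) * ((lam (t, x)) ^ 2 - lamBar ^ 2) / 8)
                * deriv (deriv (fun y => lam (t, y))) x
            + (lam (t, x)) ^ 2 * u (t, x) / 4 * deriv (deriv (fun y => u (t, y))) x
            + (lam (t, x)) ^ 2 * v (t, x) / 4 * deriv (deriv (fun y => v (t, y))) x) :=
  stmt_5_general lamBar f ε lam u v hlam hu hv heq1 heq2 heq3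
end

section
/- Let α > 0 and let h : ℝ → ℝ be twice continuously differentiable with h(x) ≥ α for all x, and assume h′ has compact support. Then ∫_ℝ h′′(x)·h′(x)²/h(x) dx = (1/3)·∫_ℝ h′(x)⁴/h(x)² dx. -/
/-!
`(h′³/h)′ = 3 h″h′²/h − h′⁴/h²`, and `h′³/h` is C¹ with compact support, so the integral of its
derivative over `ℝ` vanishes.
-/

open MeasureTheory

theorem HasDerivAt.pow_three_div {u h : ℝ → ℝ} {u' x : ℝ} (hu : HasDerivAt u u' x)
    (hh : HasDerivAt h (u x) x) (hx : h x ≠ 0) :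
    HasDerivAt (fun y => u y ^ 3 / h y) (3 * (u' * u x ^ 2 / h x) - u x ^ 4 / h x ^ 2) x :=
  ((hu.fun_pow 3).fun_div hh hx).congr_deriv (by field_simp; ring)

theorem integral_deriv_deriv_mul_sq_div {h : ℝ → ℝ} (hh : ContDiff ℝ 2 h) (h0 : ∀ x, h x ≠ 0)
    (hsupp : HasCompactSupport (deriv h)) :
    ∫ x, deriv (deriv h) x * deriv h x ^ 2 / h x = (1 / 3) * ∫ x, deriv h x ^ 4 / h x ^ 2 := by
  set u := deriv h
  have hu : ContDiff ℝ 1 u := hh.deriv'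
  have h_cont := hh.continuous
  have hu_cont := hu.continuous
  have hu'_cont := hu.continuous_deriv le_rfl
  have hA : Integrable fun x => deriv u x * u x ^ 2 / h x :=
    ((hu'_cont.mul (hu_cont.pow 2)).div h_cont h0).integrable_of_hasCompactSupport
      (hsupp.mono fun x hx hux => hx (by simp [hux]))
  have hB : Integrable fun x => u x ^ 4 / h x ^ 2 :=
    ((hu_cont.pow 4).div (h_cont.pow 2) fun x => pow_ne_zero 2 (h0 x))
      |>.integrable_of_hasCompactSupport
      (hsupp.mono fun x hx hux => hx (by simp [hux]))
  have hF : Integrable fun x => u x ^ 3 / h x :=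
    ((hu_cont.pow 3).div h_cont h0).integrable_of_hasCompactSupport
      (hsupp.mono fun x hx hux => hx (by simp [hux]))
  have hF_deriv : ∀ x, HasDerivAt (fun y => u y ^ 3 / h y)
      (3 * (deriv u x * u x ^ 2 / h x) - u x ^ 4 / h x ^ 2) x := fun x =>
    ((hu.differentiable one_ne_zero x).hasDerivAt).pow_three_div
      ((hh.differentiable two_ne_zero x).hasDerivAt) (h0 x)
  have key := integral_eq_zero_of_hasDerivAt_of_integrable hF_deriv ((hA.const_mul 3).sub hB) hF
  rw [integral_sub (hA.const_mul 3) hB, integral_const_mul] at key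
  linarith

/-- If `h` is C² with `h ≥ α > 0` and `h′` has compact support, then
`∫ h″ h′²/h = (1/3) ∫ h′⁴/h²`. -/
theorem stmt_14 (α : ℝ) (hα : 0 < α) (h : ℝ → ℝ)
    (hh : ContDiff ℝ 2 h) (hge : ∀ x, α ≤ h x)
    (hsupp : HasCompactSupport (deriv h)) :
    ∫ x, deriv (deriv h) x * (deriv h x) ^ 2 / h x =
      (1 / 3) * ∫ x, (deriv h x) ^ 4 / (h x) ^ 2 :=
  integral_deriv_deriv_mul_sq_div hh (fun x => (hα.trans_le (hge x)).ne') hsupp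
end
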